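/- Vanishing weighted-sum sequence lemma, dominated case (Lemma 1, second part): Let a₁ > 0, a₂ ≥ 0, 0 ≤ δ₁ ≤ 1 and δ₂ > δ₁, and define s₁(t) = a₁/(t+1)^{δ₁} and s₂(t) = a₂/(t+1)^{δ₂} for integers t ≥ 0. Assume 0 < s₁(t) < 1 for all t ≥ j. Then lim_{T→∞} Σ_{t=j}^{T−1} [ s₂(t) · Π_{i=t+1}^{T−1} (1 − s₁(i)) ] = 0. -/
import Mathlib


open MeasureTheory ProbabilityTheory Filter

private lemma tele_sum (f : ℕ → ℝ) (N : ℕ) : ∀ T : ℕ,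
    ∑ t ∈ Finset.Ico N T, f t * ∏ i ∈ Finset.Ico (t + 1) T, (1 - f i)
      = 1 - ∏ i ∈ Finset.Ico N T, (1 - f i) := by
  intro T
  induction T with
  | zero => simp
  | succ T ih =>
    rcases le_or_gt N T with h | h
    · rw [Finset.sum_Ico_succ_top h, Finset.prod_Ico_succ_top h]
      have hc : ∀ t ∈ Finset.Ico N T,
          f t * ∏ i ∈ Finset.Ico (t + 1) (T + 1), (1 - f i)
            = (f t * ∏ i ∈ Finset.Ico (t + 1) T, (1 - f i)) * (1 - f T) := by
        intro t ht
        rw [Finset.prod_Ico_succ_top (Finset.mem_Ico.mp ht).2]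
        ring
      rw [Finset.sum_congr rfl hc, ← Finset.sum_mul, ih]
      simp
      ring
    · have he : Finset.Ico N (T + 1) = ∅ := Finset.Ico_eq_empty (by omega)
      rw [he]
      simp

private lemma prod_tendsto_zero (f : ℕ → ℝ) (N : ℕ)
    (h0 : ∀ i, N ≤ i → 0 ≤ 1 - f i)
    (hdiv : Tendsto (fun T : ℕ => ∑ i ∈ Finset.Ico N T, f i) atTop atTop) :
    Tendsto (fun T : ℕ => ∏ i ∈ Finset.Ico N T, (1 - f i)) atTop (nhds 0) := by
  have hub : ∀ T : ℕ, ∏ i ∈ Finset.Ico N T, (1 - f i)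
      ≤ Real.exp (-(∑ i ∈ Finset.Ico N T, f i)) := by
    intro T
    calc ∏ i ∈ Finset.Ico N T, (1 - f i)
        ≤ ∏ i ∈ Finset.Ico N T, Real.exp (-f i) := by
          apply Finset.prod_le_prod
          · intro i hi; exact h0 i (Finset.mem_Ico.mp hi).1
          · intro i hi
            have := Real.add_one_le_exp (-f i)
            linarith
      _ = Real.exp (∑ i ∈ Finset.Ico N T, (-f i)) := (Real.exp_sum _ _).symm
      _ = Real.exp (-(∑ i ∈ Finset.Ico N T, f i)) := by rw [Finset.sum_neg_distrib]
  have hlb : ∀ T : ℕ, 0 ≤ ∏ i ∈ Finset.Ico N T, (1 - f i) := by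
    intro T
    exact Finset.prod_nonneg fun i hi => h0 i (Finset.mem_Ico.mp hi).1
  have hexp : Tendsto (fun T : ℕ => Real.exp (-(∑ i ∈ Finset.Ico N T, f i)))
      atTop (nhds 0) :=
    Real.tendsto_exp_atBot.comp (tendsto_neg_atTop_atBot.comp hdiv)
  exact tendsto_of_tendsto_of_tendsto_of_le_of_le tendsto_const_nhds hexp hlb hub

private lemma sum_s1_div (a₁ δ₁ : ℝ) (N : ℕ) (ha₁ : 0 < a₁) (hδ₁1 : δ₁ ≤ 1) :
    Tendsto (fun T : ℕ => ∑ i ∈ Finset.Ico N T, a₁ / ((i : ℝ) + 1) ^ δ₁)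
      atTop atTop := by
  have hns : ¬ Summable (fun i : ℕ => a₁ / ((i : ℝ) + 1)) := by
    intro h
    have h2 : Summable (fun i : ℕ => 1 / ((i : ℝ) + 1)) := by
      have := h.mul_left a₁⁻¹
      simpa [div_eq_mul_inv, ← mul_assoc, inv_mul_cancel₀ ha₁.ne'] using this
    have h3 : Summable (fun i : ℕ => 1 / ((i : ℝ))) := by
      rw [← summable_nat_add_iff 1]
      exact h2.congr fun i => by push_cast; ring
    exact Real.not_summable_one_div_natCast h3
  have hnonneg : ∀ i : ℕ, 0 ≤ a₁ / ((i : ℝ) + 1) := by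
    intro i; positivity
  have hrange : Tendsto (fun T : ℕ => ∑ i ∈ Finset.range T, a₁ / ((i : ℝ) + 1))
      atTop atTop :=
    (not_summable_iff_tendsto_nat_atTop_of_nonneg hnonneg).mp hns
  have hIco : Tendsto (fun T : ℕ => ∑ i ∈ Finset.Ico N T, a₁ / ((i : ℝ) + 1))
      atTop atTop := by
    apply Tendsto.congr' (f₁ := fun T =>
      (∑ i ∈ Finset.range T, a₁ / ((i : ℝ) + 1)) - ∑ i ∈ Finset.range N, a₁ / ((i : ℝ) + 1))
    · filter_upwards [eventually_ge_atTop N] with T hT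
      rw [Finset.sum_Ico_eq_sub _ hT]
    · exact tendsto_atTop_add_const_right _ _ hrange
  apply tendsto_atTop_mono _ hIco
  intro T
  apply Finset.sum_le_sum
  intro i _
  have hx : (0:ℝ) < (i : ℝ) + 1 := by positivity
  gcongr
  calc ((i : ℝ) + 1) ^ δ₁ ≤ ((i : ℝ) + 1) ^ (1 : ℝ) :=
        Real.rpow_le_rpow_of_exponent_le (by linarith) hδ₁1
    _ = (i : ℝ) + 1 := Real.rpow_one _

theorem sequence_lemma_vanishing (a₁ a₂ δ₁ δ₂ : ℝ) (j : ℕ)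
    (ha₁ : 0 < a₁) (ha₂ : 0 ≤ a₂) (hδ₁0 : 0 ≤ δ₁) (hδ₁1 : δ₁ ≤ 1) (hδ : δ₁ < δ₂)
    (hs₁ : ∀ t : ℕ, j ≤ t →
      0 < a₁ / ((t : ℝ) + 1) ^ δ₁ ∧ a₁ / ((t : ℝ) + 1) ^ δ₁ < 1) :
    Tendsto (fun T : ℕ =>
        ∑ t ∈ Finset.Ico j T, a₂ / ((t : ℝ) + 1) ^ δ₂ *
          ∏ i ∈ Finset.Ico (t + 1) T, (1 - a₁ / ((i : ℝ) + 1) ^ δ₁))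
      atTop (nhds 0) := by
  set s₁ : ℕ → ℝ := fun t => a₁ / ((t : ℝ) + 1) ^ δ₁ with hs₁def
  set s₂ : ℕ → ℝ := fun t => a₂ / ((t : ℝ) + 1) ^ δ₂ with hs₂def
  have hs₂nonneg : ∀ t : ℕ, 0 ≤ s₂ t := by
    intro t; positivity
  have hfac : ∀ i : ℕ, j ≤ i → 0 ≤ 1 - s₁ i ∧ 1 - s₁ i ≤ 1 := by
    intro i hi
    obtain ⟨h1, h2⟩ := hs₁ i hi
    constructor <;> linarith
  have hSnonneg : ∀ T : ℕ, 0 ≤ ∑ t ∈ Finset.Ico j T, s₂ t *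
      ∏ i ∈ Finset.Ico (t + 1) T, (1 - s₁ i) := by
    intro T
    apply Finset.sum_nonneg
    intro t ht
    apply mul_nonneg (hs₂nonneg t)
    apply Finset.prod_nonneg
    intro i hi
    exact (hfac i (by
      have := (Finset.mem_Ico.mp ht).1
      have := (Finset.mem_Ico.mp hi).1
      omega)).1
  rw [tendsto_order]
  constructor
  · intro a ha
    filter_upwards with T
    exact lt_of_lt_of_le ha (hSnonneg T)
  intro ε hε
  -- Step 1: choose N ≥ j with s₂ t ≤ (ε/4) s₁ t for t ≥ N
  have hratio : ∀ᶠ t : ℕ in atTop, s₂ t ≤ (ε / 4) * s₁ t := by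
    have h1 : Tendsto (fun t : ℕ => ((t : ℝ) + 1)) atTop atTop :=
      tendsto_atTop_add_const_right _ _ tendsto_natCast_atTop_atTop
    have h2 : Tendsto (fun t : ℕ => (ε / 4) * a₁ * ((t : ℝ) + 1) ^ (δ₂ - δ₁))
        atTop atTop := by
      apply Tendsto.const_mul_atTop (by positivity)
      exact (tendsto_rpow_atTop (by linarith)).comp h1
    filter_upwards [h2.eventually_ge_atTop a₂] with t ht
    have hx : (0:ℝ) < (t : ℝ) + 1 := by positivity
    have hp1 : (0:ℝ) < ((t : ℝ) + 1) ^ δ₁ := Real.rpow_pos_of_pos hx _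
    have hp2 : (0:ℝ) < ((t : ℝ) + 1) ^ δ₂ := Real.rpow_pos_of_pos hx _
    have hsub : ((t : ℝ) + 1) ^ (δ₂ - δ₁) = ((t : ℝ) + 1) ^ δ₂ / ((t : ℝ) + 1) ^ δ₁ :=
      Real.rpow_sub hx _ _
    rw [hsub] at ht
    show a₂ / ((t : ℝ) + 1) ^ δ₂ ≤ (ε / 4) * (a₁ / ((t : ℝ) + 1) ^ δ₁)
    rw [div_le_iff₀ hp2]
    calc a₂ ≤ ε / 4 * a₁ * (((t : ℝ) + 1) ^ δ₂ / ((t : ℝ) + 1) ^ δ₁) := ht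
      _ = ε / 4 * (a₁ / ((t : ℝ) + 1) ^ δ₁) * ((t : ℝ) + 1) ^ δ₂ := by
          field_simp
  obtain ⟨N0, hN0⟩ := eventually_atTop.mp hratio
  set N := max N0 j with hNdef
  have hjN : j ≤ N := le_max_right _ _
  have hN : ∀ t, N ≤ t → s₂ t ≤ (ε / 4) * s₁ t := fun t ht =>
    hN0 t (le_trans (le_max_left _ _) ht)
  -- Step 2: P(N,T) → 0
  have hP0 : Tendsto (fun T : ℕ => ∏ i ∈ Finset.Ico N T, (1 - s₁ i)) atTop (nhds 0) := by
    apply prod_tendsto_zero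
    · intro i hi; exact (hfac i (le_trans hjN hi)).1
    · exact sum_s1_div a₁ δ₁ N ha₁ hδ₁1
  set C : ℝ := ∑ t ∈ Finset.Ico j N, s₂ t with hCdef
  have hC0 : 0 ≤ C := Finset.sum_nonneg fun t _ => hs₂nonneg t
  have hCP : Tendsto (fun T : ℕ => C * ∏ i ∈ Finset.Ico N T, (1 - s₁ i)) atTop (nhds 0) := by
    simpa using hP0.const_mul C
  have hCPlt : ∀ᶠ T : ℕ in atTop, C * ∏ i ∈ Finset.Ico N T, (1 - s₁ i) < ε / 2 := by
    have := hCP.eventually (eventually_lt_nhds (show (0:ℝ) < ε / 2 by linarith))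
    simpa using this
  filter_upwards [hCPlt, eventually_ge_atTop N] with T hT1 hT2
  have hPnonneg : ∀ (a b : ℕ), j ≤ a → 0 ≤ ∏ i ∈ Finset.Ico a b, (1 - s₁ i) := by
    intro a b ha
    apply Finset.prod_nonneg
    intro i hi
    exact (hfac i (le_trans ha (Finset.mem_Ico.mp hi).1)).1
  -- split the sum
  rw [← Finset.sum_Ico_consecutive _ hjN hT2]
  have hbound1 : ∑ t ∈ Finset.Ico j N, s₂ t * ∏ i ∈ Finset.Ico (t + 1) T, (1 - s₁ i)
      ≤ C * ∏ i ∈ Finset.Ico N T, (1 - s₁ i) := by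
    rw [hCdef, Finset.sum_mul]
    apply Finset.sum_le_sum
    intro t ht
    obtain ⟨htj, htN⟩ := Finset.mem_Ico.mp ht
    have ht1N : t + 1 ≤ N := htN
    rw [← Finset.prod_Ico_consecutive _ ht1N hT2]
    have hle1 : ∏ i ∈ Finset.Ico (t + 1) N, (1 - s₁ i) ≤ 1 := by
      apply Finset.prod_le_one
      · intro i hi; exact (hfac i (by have := (Finset.mem_Ico.mp hi).1; omega)).1
      · intro i hi; exact (hfac i (by have := (Finset.mem_Ico.mp hi).1; omega)).2
    have h1 := hPnonneg N T hjN
    have h2 : (∏ i ∈ Finset.Ico (t + 1) N, (1 - s₁ i)) * ∏ i ∈ Finset.Ico N T, (1 - s₁ i)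
        ≤ ∏ i ∈ Finset.Ico N T, (1 - s₁ i) := mul_le_of_le_one_left h1 hle1
    exact mul_le_mul_of_nonneg_left h2 (hs₂nonneg t)
  have hbound2 : ∑ t ∈ Finset.Ico N T, s₂ t * ∏ i ∈ Finset.Ico (t + 1) T, (1 - s₁ i)
      ≤ ε / 4 := by
    calc ∑ t ∈ Finset.Ico N T, s₂ t * ∏ i ∈ Finset.Ico (t + 1) T, (1 - s₁ i)
        ≤ ∑ t ∈ Finset.Ico N T, (ε / 4) * (s₁ t * ∏ i ∈ Finset.Ico (t + 1) T, (1 - s₁ i)) := by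
          apply Finset.sum_le_sum
          intro t ht
          have htN := (Finset.mem_Ico.mp ht).1
          have hprod := hPnonneg (t+1) T (by omega)
          rw [← mul_assoc]
          exact mul_le_mul_of_nonneg_right (hN t htN) hprod
      _ = (ε / 4) * (1 - ∏ i ∈ Finset.Ico N T, (1 - s₁ i)) := by
          rw [← Finset.mul_sum, tele_sum]
      _ ≤ ε / 4 := by
          have := hPnonneg N T hjN
          nlinarith
  calc ∑ t ∈ Finset.Ico j N, s₂ t * ∏ i ∈ Finset.Ico (t + 1) T, (1 - s₁ i)
        + ∑ t ∈ Finset.Ico N T, s₂ t * ∏ i ∈ Finset.Ico (t + 1) T, (1 - s₁ i)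
      ≤ C * ∏ i ∈ Finset.Ico N T, (1 - s₁ i) + ε / 4 := add_le_add hbound1 hbound2
    _ < ε := by linarith
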